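/- arXiv:2504.18016 — 2 statements merged into one kernel-verified Lean document; each statement's English description precedes it below -/
import Mathlib

section
/- Under the same assumptions, the expected integrated sidelobe level of the periodic ACF satisfies Σ_{k=1}^{N−1} E|r̃_k|² = [(N−1)μ₄ + 1]·Σ_{i=1}^N P_i² − N². -/
/-!
Write `Xₙ = ‖sₙ‖²`. Independence gives `E[Xₙ Xₘ] = 1 + (μ₄ - 1) δₙₘ`, so expanding the square
yields `E|r̃ₖ|² = |∑ₙ Pₙ ζ^(kn)|² + (μ₄ - 1) ∑ₙ Pₙ²` with `ζ = e^(2πi/N)`. Summed over all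
`k < N`, orthogonality of the powers of the primitive root `ζ` (Parseval) turns the first terms into
`N ∑ₙ Pₙ²`, and the omitted term `k = 0` is `(∑ₙ Pₙ)² = N²`.
-/

open MeasureTheory ProbabilityTheory Complex Finset ComplexConjugate

theorem Complex.norm_sum_sq_eq_sum_sum_re {ι : Type*} (t : Finset ι) (z : ι → ℂ) :
    ‖∑ i ∈ t, z i‖ ^ 2 = ∑ i ∈ t, ∑ j ∈ t, (z i * conj (z j)).re := by
  rw [← ofReal_re (_ ^ 2), ofReal_pow, ← mul_conj', map_sum, sum_mul_sum, re_sum]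
  simp only [re_sum]

theorem IsPrimitiveRoot.sum_pow_mul_conj_pow_eq_ite {ζ : ℂ} {N : ℕ} (hζ : IsPrimitiveRoot ζ N)
    {n m : ℕ} (hn : n < N) (hm : m < N) :
    ∑ k ∈ range N, ζ ^ (k * n) * conj (ζ ^ (k * m)) = if n = m then (N : ℂ) else 0 := by
  have hnorm : ∀ l : ℕ, ζ ^ l * conj (ζ ^ l) = 1 := fun l => by
    rw [mul_conj', norm_pow, hζ.norm'_eq_one (by omega)]; simp
  set w := ζ ^ n * conj (ζ ^ m)
  have hterm : ∀ k, ζ ^ (k * n) * conj (ζ ^ (k * m)) = w ^ k := fun k => by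
    rw [mul_comm k n, mul_comm k m, pow_mul, pow_mul, map_pow, ← mul_pow]
  simp_rw [hterm]
  split_ifs with h
  · subst h; simp [w, hnorm]
  · have hw1 : w ≠ 1 := fun hw => h <| hζ.pow_inj hn hm <|
      calc ζ ^ n = w * ζ ^ m := by rw [mul_assoc, mul_comm (conj _), hnorm, mul_one]
        _ = ζ ^ m := by rw [hw, one_mul]
    have hwN : w ^ N = 1 := by
      rw [mul_pow, ← pow_mul, ← map_pow, ← pow_mul, mul_comm n, mul_comm m, pow_mul, pow_mul,
        hζ.pow_eq_one]
      simp
    rw [geom_sum_eq hw1, hwN, sub_self, zero_div]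

theorem IsPrimitiveRoot.sum_norm_sq_sum_mul_pow {ζ : ℂ} {N : ℕ} (hζ : IsPrimitiveRoot ζ N)
    (a : Fin N → ℂ) :
    ∑ k ∈ range N, ‖∑ n : Fin N, a n * ζ ^ (k * n)‖ ^ 2 = N * ∑ n : Fin N, ‖a n‖ ^ 2 := by
  apply ofReal_injective
  push_cast
  simp_rw [← mul_conj', map_sum, sum_mul_sum, map_mul]
  calc ∑ k ∈ range N, ∑ n : Fin N, ∑ m : Fin N, a n * ζ ^ (k * n) * (conj (a m) * conj (ζ ^ (k * m)))
      = ∑ n : Fin N, ∑ m : Fin N,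
          a n * conj (a m) * ∑ k ∈ range N, ζ ^ (k * n) * conj (ζ ^ (k * m)) := by
        rw [sum_comm]
        refine sum_congr rfl fun n _ => ?_
        rw [sum_comm]
        simp_rw [mul_sum]
        exact sum_congr rfl fun m _ => sum_congr rfl fun k _ => by ring
    _ = N * ∑ n : Fin N, a n * conj (a n) := by
        simp_rw [hζ.sum_pow_mul_conj_pow_eq_ite (Fin.is_lt _) (Fin.is_lt _), Fin.val_inj, mul_ite,
          mul_zero, sum_ite_eq, mem_univ, if_true, mul_sum]
        exact sum_congr rfl fun n _ => by ring

theorem MeasureTheory.MemLp.norm_sq {α E : Type*} [MeasurableSpace α] {μ : Measure α}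
    [NormedAddCommGroup E] {f : α → E} {p : ENNReal} (hf : MemLp f (2 * p) μ) :
    MemLp (fun x => ‖f x‖ ^ 2) p μ := by
  simpa [mul_comm 2 p, ENNReal.mul_div_cancel_right two_ne_zero ENNReal.ofNat_ne_top]
    using hf.norm_rpow_div 2

section Moments

variable {Ω ι : Type*} [MeasurableSpace Ω] {μ : Measure Ω}

theorem integral_mul_eq_ite_of_iIndepFun [DecidableEq ι] {X : ι → Ω → ℝ}
    (hX : ∀ i, AEStronglyMeasurable (X i) μ) (hindep : iIndepFun X μ) {m₂ : ℝ}
    (h1 : ∀ i, ∫ ω, X i ω ∂μ = 1) (h2 : ∀ i, ∫ ω, X i ω ^ 2 ∂μ = m₂) (i j : ι) :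
    ∫ ω, X i ω * X j ω ∂μ = if i = j then m₂ else 1 := by
  split_ifs with h
  · subst h; simp_rw [← sq, h2]
  · rw [(hindep.indepFun h).integral_fun_mul_eq_mul_integral (hX i) (hX j), h1, h1, mul_one]

theorem integral_norm_sq_sum_mul_eq [Fintype ι] [DecidableEq ι] {X : ι → Ω → ℝ}
    (hX : ∀ i, MemLp (X i) 2 μ) {m₂ : ℝ}
    (hmom : ∀ i j, ∫ ω, X i ω * X j ω ∂μ = if i = j then m₂ else 1) (a : ι → ℂ) :
    ∫ ω, ‖∑ i, a i * X i ω‖ ^ 2 ∂μ = ‖∑ i, a i‖ ^ 2 + (m₂ - 1) * ∑ i, ‖a i‖ ^ 2 := by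
  have hint : ∀ i j, Integrable (fun ω => X i ω * X j ω) μ := fun i j =>
    (hX i).integrable_mul (hX j)
  have hpt : ∀ ω, ‖∑ i, a i * X i ω‖ ^ 2
      = ∑ i, ∑ j, (a i * conj (a j)).re * (X i ω * X j ω) := fun ω => by
    rw [Complex.norm_sum_sq_eq_sum_sum_re]
    refine sum_congr rfl fun i _ => sum_congr rfl fun j _ => ?_
    rw [map_mul, conj_ofReal, show a i * X i ω * (conj (a j) * X j ω)
      = ((X i ω * X j ω : ℝ) : ℂ) * (a i * conj (a j)) by push_cast; ring, re_ofReal_mul, mul_comm]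
  simp_rw [hpt]
  rw [integral_finsetSum _ fun i _ => integrable_finsetSum _ fun j _ => (hint i j).const_mul _]
  simp_rw [integral_finsetSum _ fun j _ => (hint _ j).const_mul _, integral_const_mul, hmom]
  rw [Complex.norm_sum_sq_eq_sum_sum_re, mul_sum, ← sum_add_distrib]
  refine sum_congr rfl fun i _ => ?_
  have hdiag : ∀ j, (a i * conj (a j)).re * (if i = j then m₂ else 1)
      = (a i * conj (a j)).re + if i = j then (m₂ - 1) * (a i * conj (a j)).re else 0 := by
    intro j; split_ifs <;> ring
  simp_rw [hdiag, sum_add_distrib, sum_ite_eq, mem_univ, if_true, mul_conj', ← ofReal_pow,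
    ofReal_re]

end Moments

theorem eisl_periodic_acf_general {Ω : Type*} [MeasurableSpace Ω] (μ : Measure Ω)
    [IsProbabilityMeasure μ] (N : ℕ) (s : Fin N → Ω → ℂ)
    (hindep : iIndepFun s μ)
    (hL4 : ∀ n, MemLp (s n) 4 μ)
    (μ4 : ℝ)
    (h2 : ∀ n, ∫ ω, ‖s n ω‖ ^ 2 ∂μ = 1)
    (h4 : ∀ n, ∫ ω, ‖s n ω‖ ^ 4 ∂μ = μ4)
    (P : Fin N → ℝ) (hsum : ∑ i : Fin N, P i = N) :
    ∑ k ∈ Finset.Ico 1 N,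
        ∫ ω, ‖∑ n : Fin N, ((P n : ℝ) : ℂ) * ((‖s n ω‖ ^ 2 : ℝ) : ℂ) *
            Complex.exp (2 * Real.pi * Complex.I * (k : ℂ) * ((n : ℕ) : ℂ) / N)‖ ^ 2 ∂μ
      = ((N - 1 : ℝ) * μ4 + 1) * ∑ i : Fin N, P i ^ 2 - (N : ℝ) ^ 2 := by
  obtain rfl | hN := N.eq_zero_or_pos
  · simp
  have hX : ∀ n, MemLp (fun ω => ‖s n ω‖ ^ 2) 2 μ := fun n =>
    MemLp.norm_sq (by norm_num [hL4])
  have hmom := integral_mul_eq_ite_of_iIndepFun (fun n => (hX n).aestronglyMeasurable)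
    (hindep.comp (fun _ z => ‖z‖ ^ 2) fun _ => by fun_prop) h2
    (m₂ := μ4) (fun n => by simp_rw [← pow_mul, h4])
  set ζ := exp (2 * Real.pi * I / N)
  have hζ : IsPrimitiveRoot ζ N := isPrimitiveRoot_exp N hN.ne'
  have hexp : ∀ k n : ℕ, exp (2 * Real.pi * I * k * n / N) = ζ ^ (k * n) := fun k n => by
    rw [← exp_nat_mul]; push_cast; ring_nf
  have hk0 : ‖∑ n : Fin N, (P n : ℂ) * ζ ^ (0 * (n : ℕ))‖ ^ 2 = N ^ 2 := by
    simp [← ofReal_sum, hsum]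
  have hparseval := hζ.sum_norm_sq_sum_mul_pow (fun n => (P n : ℂ))
  rw [range_eq_Ico, sum_eq_sum_Ico_succ_bot hN, hk0] at hparseval
  simp_rw [norm_real, Real.norm_eq_abs, sq_abs] at hparseval
  simp_rw [hexp, mul_right_comm _ _ (ζ ^ _), integral_norm_sq_sum_mul_eq hX hmom, norm_mul,
    norm_pow, hζ.norm'_eq_one hN.ne', one_pow, mul_one, norm_real, Real.norm_eq_abs, sq_abs,
    sum_add_distrib, sum_const, Nat.card_Ico, nsmul_eq_mul, Nat.cast_sub hN]
  push_cast
  linear_combination hparseval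

/-- EISL of the periodic ACF:
`Σ_{k=1}^{N−1} E|r̃_k|² = [(N−1)μ₄ + 1]·Σ_i P_i² − N²` when `Σ_i P_i = N`,
where `r̃_k = Σ_n P_n |s_n|² e^{2πi k(n-1)/N}` for i.i.d. symbols. -/
theorem eisl_periodic_acf {Ω : Type*} [MeasurableSpace Ω] (μ : Measure Ω)
    [IsProbabilityMeasure μ] (N : ℕ) (hN : 0 < N) (s : Fin N → Ω → ℂ)
    (hmeas : ∀ n, Measurable (s n))
    (hindep : iIndepFun s μ)
    (hid : ∀ i j, IdentDistrib (s i) (s j) μ μ)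
    (hL4 : ∀ n, MemLp (s n) 4 μ)
    (μ4 : ℝ)
    (h2 : ∀ n, ∫ ω, ‖s n ω‖ ^ 2 ∂μ = 1)
    (h0 : ∀ n, ∫ ω, s n ω ∂μ = 0)
    (hps : ∀ n, ∫ ω, (s n ω) ^ 2 ∂μ = 0)
    (h4 : ∀ n, ∫ ω, ‖s n ω‖ ^ 4 ∂μ = μ4)
    (P : Fin N → ℝ) (hP : ∀ n, 0 ≤ P n) (hsum : ∑ i : Fin N, P i = N) :
    ∑ k ∈ Finset.Ico 1 N,
        ∫ ω, ‖∑ n : Fin N, ((P n : ℝ) : ℂ) * ((‖s n ω‖ ^ 2 : ℝ) : ℂ) *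
            Complex.exp (2 * Real.pi * Complex.I * (k : ℂ) * ((n : ℕ) : ℂ) / N)‖ ^ 2 ∂μ
      = ((N - 1 : ℝ) * μ4 + 1) * ∑ i : Fin N, P i ^ 2 - (N : ℝ) ^ 2 :=
  eisl_periodic_acf_general μ N s hindep hL4 μ4 h2 h4 P hsum
end

section
/- Among all power allocations P with P_i ≥ 0 and Σ_i P_i = N, the uniform allocation P_i ≡ 1 is the unique global minimizer of the normalized EISL of the periodic ACF, which equals Nμ₄ / ((μ₄ − 1) + N²/Σ_i P_i²) − 1; the minimum value is Nμ₄/((μ₄ − 1) + N) − 1. -/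
open Complex

/-- The normalized EISL of the periodic ACF as a function of the power allocation:
`(Σ_{k=1}^{N−1} E|r̃_k|²)/E|r̃_0|²` with
`E|r̃_k|² = (μ₄−1)Σ_i P_i² + |Σ_n P_n e^{2πikn/N}|²` and
`E|r̃_0|² = (μ₄−1)Σ_i P_i² + N²`. -/
noncomputable def nEISL (N : ℕ) (μ4 : ℝ) (P : Fin N → ℝ) : ℝ :=
  (∑ k ∈ Finset.Ico 1 N,
      ((μ4 - 1) * ∑ i : Fin N, P i ^ 2 +
        ‖∑ n : Fin N, ((P n : ℝ) : ℂ) *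
          Complex.exp (2 * Real.pi * Complex.I * (k : ℂ) * (((n : ℕ) : ℂ) + 1) / N)‖ ^ 2)) /
    ((μ4 - 1) * ∑ i : Fin N, P i ^ 2 + (N : ℝ) ^ 2)

/-!
With `ζ = exp (2πi/N)`, Parseval's identity for the discrete Fourier transform gives
`Σ_{k<N} |Σ_n P_n ζ^{k(n+1)}|² = N Σ_i P_i²`, and the `k = 0` term is `(Σ_i P_i)² = N²`.
Hence the normalized EISL depends on `P` only through `S = Σ_i P_i²`, and is strictly increasing
in `S`. Under `Σ_i P_i = N` we have `S = N + Σ_i (P_i - 1)² ≥ N`, with equality exactly for the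
uniform allocation.
-/

open Finset ComplexConjugate

theorem IsPrimitiveRoot.sum_range_zpow_pow {R : Type*} [Field R] {ζ : R} {N : ℕ}
    (hζ : IsPrimitiveRoot ζ N) (j : ℤ) :
    ∑ k ∈ range N, (ζ ^ j) ^ k = if (N : ℤ) ∣ j then (N : R) else 0 := by
  split_ifs with hj
  · simp [(hζ.zpow_eq_one_iff_dvd j).2 hj]
  · have hζj : (ζ ^ j) ^ N = 1 := by
      rw [← zpow_natCast, ← zpow_mul, mul_comm, zpow_mul, zpow_natCast, hζ.pow_eq_one, one_zpow]
    rw [geom_sum_eq (mt (hζ.zpow_eq_one_iff_dvd j).1 hj), hζj, sub_self, zero_div]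

theorem IsPrimitiveRoot.sum_range_norm_sq_sum_mul_zpow_pow {ι : Type*} [Fintype ι] {N : ℕ}
    {ζ : ℂ} (hζ : IsPrimitiveRoot ζ N) (a : ι → ℂ) (e : ι → ℤ)
    (he : ∀ n m, (N : ℤ) ∣ e n - e m → n = m) :
    ∑ k ∈ range N, ‖∑ n, a n * (ζ ^ e n) ^ k‖ ^ 2 = N * ∑ n, ‖a n‖ ^ 2 := by
  classical
  rcases N.eq_zero_or_pos with rfl | hN
  · simp
  have hconj : ∀ n, conj (ζ ^ e n) = ζ ^ (-e n) := fun n => by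
    rw [zpow_neg, Complex.inv_eq_conj (by rw [norm_zpow, hζ.norm'_eq_one hN.ne', one_zpow])]
  have hdvd : ∀ n m, (N : ℤ) ∣ e n - e m ↔ n = m := fun n m =>
    ⟨he n m, fun h => by rw [h, sub_self]; exact dvd_zero _⟩
  apply Complex.ofReal_injective
  push_cast
  calc ∑ k ∈ range N, (‖∑ n, a n * (ζ ^ e n) ^ k‖ : ℂ) ^ 2
      = ∑ k ∈ range N, ∑ n, ∑ m, a n * conj (a m) * (ζ ^ (e n - e m)) ^ k := by
        refine sum_congr rfl fun k _ => ?_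
        rw [← Complex.mul_conj', map_sum, sum_mul_sum]
        refine sum_congr rfl fun n _ => sum_congr rfl fun m _ => ?_
        rw [map_mul, map_pow, hconj, sub_eq_add_neg, zpow_add₀ (hζ.ne_zero hN.ne')]
        ring
    _ = ∑ n, ∑ m, a n * conj (a m) * ∑ k ∈ range N, (ζ ^ (e n - e m)) ^ k := by
        rw [sum_comm]
        simp_rw [mul_sum]
        exact sum_congr rfl fun n _ => sum_comm
    _ = N * ∑ n, (‖a n‖ : ℂ) ^ 2 := by
        simp_rw [hζ.sum_range_zpow_pow]
        simp [hdvd, Complex.mul_conj', mul_sum, mul_comm]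

theorem sum_Ico_norm_sq_sum_mul_exp (N : ℕ) (hN : 0 < N) (P : Fin N → ℝ) :
    ∑ k ∈ Ico 1 N, ‖∑ n : Fin N, ((P n : ℝ) : ℂ) *
        Complex.exp (2 * Real.pi * Complex.I * (k : ℂ) * (((n : ℕ) : ℂ) + 1) / N)‖ ^ 2
      = N * ∑ n, P n ^ 2 - (∑ n, P n) ^ 2 := by
  have hexp : ∀ (k : ℕ) (n : Fin N),
      Complex.exp (2 * Real.pi * Complex.I * (k : ℂ) * (((n : ℕ) : ℂ) + 1) / N)
        = (Complex.exp (2 * Real.pi * Complex.I / N) ^ ((n : ℤ) + 1)) ^ k := by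
    intro k n
    rw [← Complex.exp_int_mul, ← Complex.exp_nat_mul]
    push_cast
    ring_nf
  have hdistinct : ∀ n m : Fin N, (N : ℤ) ∣ ((n : ℤ) + 1) - ((m : ℤ) + 1) → n = m := by
    intro n m h
    have := Int.eq_zero_of_abs_lt_dvd h (by rw [abs_lt]; omega)
    omega
  have parseval := (Complex.isPrimitiveRoot_exp N hN.ne').sum_range_norm_sq_sum_mul_zpow_pow
    (fun n => (P n : ℂ)) (fun n => (n : ℤ) + 1) hdistinct
  simp_rw [← hexp, sum_range_eq_add_Ico _ hN] at parseval
  simp only [Nat.cast_zero, mul_zero, zero_mul, zero_div, Complex.exp_zero, mul_one,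
    ← Complex.ofReal_sum, Complex.norm_real, Real.norm_eq_abs, sq_abs] at parseval
  linarith

theorem sum_sq_eq_card_add_sum_sq_sub_one {ι : Type*} [Fintype ι] (P : ι → ℝ)
    (hsum : ∑ i, P i = Fintype.card ι) :
    ∑ i, P i ^ 2 = Fintype.card ι + ∑ i, (P i - 1) ^ 2 := by
  simp only [sub_sq, sum_add_distrib, sum_sub_distrib, ← sum_mul, ← mul_sum, hsum]
  simp
  ring

theorem card_le_sum_sq {ι : Type*} [Fintype ι] (P : ι → ℝ) (hsum : ∑ i, P i = Fintype.card ι) :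
    (Fintype.card ι : ℝ) ≤ ∑ i, P i ^ 2 := by
  rw [sum_sq_eq_card_add_sum_sq_sub_one P hsum]
  exact le_add_of_nonneg_right (sum_nonneg fun i _ => sq_nonneg _)

theorem sum_sq_eq_card_iff {ι : Type*} [Fintype ι] (P : ι → ℝ)
    (hsum : ∑ i, P i = Fintype.card ι) :
    ∑ i, P i ^ 2 = Fintype.card ι ↔ ∀ i, P i = 1 := by
  rw [sum_sq_eq_card_add_sum_sq_sub_one P hsum, add_eq_left,
    sum_eq_zero_iff_of_nonneg fun i _ => sq_nonneg _]
  simp [sub_eq_zero]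

noncomputable def nEISLOfSumSq (N : ℕ) (μ4 S : ℝ) : ℝ :=
  N * μ4 / ((μ4 - 1) + N ^ 2 / S) - 1

theorem strictMonoOn_nEISLOfSumSq {N : ℕ} (hN : 0 < N) {μ4 : ℝ} (hμ4 : 1 ≤ μ4) :
    StrictMonoOn (nEISLOfSumSq N μ4) (Set.Ioi 0) := by
  intro S hS T hT hST
  have hden : 0 < (μ4 - 1) + (N : ℝ) ^ 2 / T :=
    add_pos_of_nonneg_of_pos (by linarith) (div_pos (by positivity) hT)
  unfold nEISLOfSumSq
  gcongr

theorem nEISL_eq_nEISLOfSumSq {N : ℕ} (hN : 0 < N) {μ4 : ℝ} (hμ4 : 1 ≤ μ4) (P : Fin N → ℝ)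
    (hsum : ∑ i, P i = N) :
    nEISL N μ4 P = nEISLOfSumSq N μ4 (∑ i, P i ^ 2) := by
  have hS : (N : ℝ) ≤ ∑ i, P i ^ 2 := by
    simpa using card_le_sum_sq P (by simpa using hsum)
  have hSpos : 0 < ∑ i, P i ^ 2 := (Nat.cast_pos.2 hN).trans_le hS
  have hden : 0 < (μ4 - 1) * ∑ i, P i ^ 2 + (N : ℝ) ^ 2 := by
    have := mul_nonneg (sub_nonneg.2 hμ4) hSpos.le
    positivity
  unfold nEISL nEISLOfSumSq
  rw [sum_add_distrib, sum_const, sum_Ico_norm_sq_sum_mul_exp N hN P, hsum, Nat.card_Ico,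
    nsmul_eq_mul, Nat.cast_sub hN]
  field_simp
  push_cast
  ring

theorem uniform_pa_minimizes_nEISL_general (N : ℕ) (hN : 0 < N) (μ4 : ℝ) (hμ4 : 1 ≤ μ4)
    (P : Fin N → ℝ) (hsum : ∑ i : Fin N, P i = N) :
    nEISL N μ4 P
        = (N : ℝ) * μ4 / ((μ4 - 1) + (N : ℝ) ^ 2 / ∑ i : Fin N, P i ^ 2) - 1 ∧
      nEISL N μ4 (fun _ => 1) ≤ nEISL N μ4 P ∧
      ((nEISL N μ4 P = nEISL N μ4 (fun _ => 1)) ↔ ∀ i, P i = 1) ∧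
      nEISL N μ4 (fun _ => 1) = (N : ℝ) * μ4 / ((μ4 - 1) + N) - 1 := by
  have hNpos : (0 : ℝ) < N := by exact_mod_cast hN
  have hsum' : ∑ i, P i = Fintype.card (Fin N) := by simpa using hsum
  have hS : (N : ℝ) ≤ ∑ i, P i ^ 2 := by simpa using card_le_sum_sq P hsum'
  have hmono := strictMonoOn_nEISLOfSumSq hN hμ4
  have huniform : nEISL N μ4 (fun _ => 1) = nEISLOfSumSq N μ4 N := by
    simpa using nEISL_eq_nEISLOfSumSq hN hμ4 (fun _ => 1) (by simp)
  rw [huniform, nEISL_eq_nEISLOfSumSq hN hμ4 P hsum]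
  refine ⟨rfl, hmono.monotoneOn hNpos (hNpos.trans_le hS) hS, ?_, ?_⟩
  · rw [hmono.eq_iff_eq (hNpos.trans_le hS) hNpos, ← sum_sq_eq_card_iff P hsum',
      Fintype.card_fin]
  · rw [nEISLOfSumSq, sq, mul_div_cancel_right₀ _ hNpos.ne']

/-- Among all power allocations `P ≥ 0` with `Σ P_i = N`, the uniform allocation `P ≡ 1`
is the unique global minimizer of the normalized EISL of the P-ACF, which equals
`Nμ₄/((μ₄−1) + N²/Σ_i P_i²) − 1`; the minimum value is `Nμ₄/((μ₄−1)+N) − 1`. -/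
theorem uniform_pa_minimizes_nEISL (N : ℕ) (hN : 0 < N) (μ4 : ℝ) (hμ4 : 1 ≤ μ4)
    (P : Fin N → ℝ) (hP : ∀ i, 0 ≤ P i) (hsum : ∑ i : Fin N, P i = N) :
    nEISL N μ4 P
        = (N : ℝ) * μ4 / ((μ4 - 1) + (N : ℝ) ^ 2 / ∑ i : Fin N, P i ^ 2) - 1 ∧
      nEISL N μ4 (fun _ => 1) ≤ nEISL N μ4 P ∧
      ((nEISL N μ4 P = nEISL N μ4 (fun _ => 1)) ↔ ∀ i, P i = 1) ∧
      nEISL N μ4 (fun _ => 1) = (N : ℝ) * μ4 / ((μ4 - 1) + N) - 1 :=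
  uniform_pa_minimizes_nEISL_general N hN μ4 hμ4 P hsum
end
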